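/- arXiv:2301.00326 — 11 statements merged into one kernel-verified Lean document; each statement's English description precedes it below -/
import Mathlib

section
/- Let p be a monic real polynomial of even degree 2m with m ≥ 1, and let P(x,t) be its heat evolution. Then there exists a real number T* such that for every t > T*, the function x ↦ P(x,t) is convex on all of ℝ. -/
open Polynomial Finset

/-- The heat evolution of a real polynomial `p`:
`P(x,t) = Σ_{k≥0} (t^k/(2^k·k!)) · p^{(2k)}(x)` (a finite sum). -/
noncomputable def heatEvo (p : Polynomial ℝ) (x t : ℝ) : ℝ :=
  ∑ k ∈ Finset.range (p.natDegree + 1),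
    t ^ k / (2 ^ k * (Nat.factorial k)) * ((Polynomial.derivative^[2 * k] p).eval x)

private lemma two_pow_mul_factorial_le (k : ℕ) : 2 ^ k * k.factorial ≤ (2 * k).factorial := by
  induction k with
  | zero => simp
  | succ k ih =>
    have h2 : 2 * (k + 1) = (2 * k + 1) + 1 := by ring
    rw [h2, Nat.factorial_succ, Nat.factorial_succ, pow_succ, Nat.factorial_succ]
    calc 2 ^ k * 2 * ((k + 1) * k.factorial)
        = (2 * (k + 1)) * (2 ^ k * k.factorial) := by ring
      _ ≤ ((2 * k + 1) + 1) * ((2 * k + 1) * (2 * k).factorial) := by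
          refine Nat.mul_le_mul (by omega) ?_
          exact le_trans ih (Nat.le_mul_of_pos_left _ (by omega))

private lemma key (m : ℕ) (hm : 1 ≤ m) (q : Polynomial ℝ) (hq : q.natDegree < 2 * m - 1)
    (hc : 0 < q.coeff (2 * m - 2)) :
    ∃ T : ℝ, ∀ t : ℝ, T < t → ∀ x : ℝ,
      0 ≤ ∑ k ∈ Finset.range (2 * m + 1),
        t ^ k / (2 ^ k * (Nat.factorial k)) * ((Polynomial.derivative^[2 * k] q).eval x) := by
  set n : ℕ := 2 * m - 2 with hn
  set c : ℝ := q.coeff n with hcdef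
  set B : ℝ := ∑ j ∈ range n, |q.coeff j| * ((2 * m + 1) * (2 * m).factorial) with hBdef
  have hB0 : 0 ≤ B := Finset.sum_nonneg fun j _ => by positivity
  refine ⟨max 1 ((B / c) ^ 2), fun t ht x => ?_⟩
  have ht1 : (1 : ℝ) < t := lt_of_le_of_lt (le_max_left _ _) ht
  have ht0 : (0 : ℝ) < t := by linarith
  set M : ℝ := max |x| (Real.sqrt t) with hMdef
  have hsqrtM : Real.sqrt t ≤ M := le_max_right _ _
  have hxM : |x| ≤ M := le_max_left _ _
  have hM1 : (1 : ℝ) ≤ M := le_trans (Real.one_le_sqrt.mpr ht1.le) hsqrtM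
  have hM0 : (0 : ℝ) ≤ M := by linarith
  have hMc : B ≤ c * M := by
    have h1 : B / c < Real.sqrt t := by
      have : Real.sqrt ((B / c) ^ 2) < Real.sqrt t :=
        Real.sqrt_lt_sqrt (by positivity) (lt_of_le_of_lt (le_max_right _ _) ht)
      rwa [Real.sqrt_sq (by positivity)] at this
    have : B / c ≤ M := le_trans h1.le hsqrtM
    calc B = (B / c) * c := by field_simp
      _ ≤ M * c := mul_le_mul_of_nonneg_right this hc.le
      _ = c * M := mul_comm _ _
  -- coefficients
  set a : ℕ → ℝ := fun k => t ^ k / (2 ^ k * (Nat.factorial k)) with hadef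
  have ha0 : ∀ k, 0 ≤ a k := fun k => by positivity
  -- heat polynomials
  set H : ℕ → ℝ := fun j => ∑ k ∈ range (2 * m + 1),
      a k * ((j.descFactorial (2 * k) : ℝ) * x ^ (j - 2 * k)) with hHdef
  have hrep : ∀ k, (Polynomial.derivative^[2 * k] q).eval x
      = ∑ j ∈ range (n + 1),
          q.coeff j * ((j.descFactorial (2 * k) : ℝ) * x ^ (j - 2 * k)) := by
    intro k
    conv_lhs => rw [q.as_sum_range' (n + 1) (by omega)]
    rw [Polynomial.iterate_derivative_sum, Polynomial.eval_finset_sum]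
    refine Finset.sum_congr rfl fun j _ => ?_
    rw [← Polynomial.C_mul_X_pow_eq_monomial, Polynomial.iterate_derivative_C_mul,
        Polynomial.iterate_derivative_X_pow_eq_C_mul, Polynomial.eval_mul, Polynomial.eval_C,
        Polynomial.eval_mul, Polynomial.eval_C, Polynomial.eval_pow, Polynomial.eval_X]
  have hS : ∑ k ∈ range (2 * m + 1), a k * ((Polynomial.derivative^[2 * k] q).eval x)
      = ∑ j ∈ range (n + 1), q.coeff j * H j := by
    simp only [hrep, Finset.mul_sum]
    rw [Finset.sum_comm]
    refine Finset.sum_congr rfl fun j _ => ?_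
    rw [hHdef, Finset.mul_sum]
    exact Finset.sum_congr rfl fun k _ => by ring
  -- lower bound on H n
  have hHn_term_nonneg : ∀ k ∈ range (2 * m + 1),
      0 ≤ a k * ((n.descFactorial (2 * k) : ℝ) * x ^ (n - 2 * k)) := by
    intro k _
    have hev : ∃ r, n - 2 * k = 2 * r := ⟨(m - 1) - k, by omega⟩
    obtain ⟨r, hr⟩ := hev
    rw [hr, pow_mul]
    positivity
  have hHn_ge_xn : x ^ n ≤ H n := by
    have h0 : a 0 * ((n.descFactorial (2 * 0) : ℝ) * x ^ (n - 2 * 0)) = x ^ n := by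
      simp [hadef]
    calc x ^ n = a 0 * ((n.descFactorial (2 * 0) : ℝ) * x ^ (n - 2 * 0)) := h0.symm
      _ ≤ H n := Finset.single_le_sum hHn_term_nonneg (Finset.mem_range.mpr (by omega))
  have hHn_ge_t : t ^ (m - 1) ≤ H n := by
    have hmem : m - 1 ∈ range (2 * m + 1) := Finset.mem_range.mpr (by omega)
    have hterm : t ^ (m - 1) ≤ a (m - 1) *
        ((n.descFactorial (2 * (m - 1)) : ℝ) * x ^ (n - 2 * (m - 1))) := by
      have h1 : 2 * (m - 1) = n := by omega
      have h2 : n - 2 * (m - 1) = 0 := by omega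
      rw [h2, h1, Nat.descFactorial_self, pow_zero, mul_one]
      simp only [hadef]
      have hfle : ((2 : ℝ) ^ (m - 1) * ((m - 1).factorial : ℝ)) ≤ (n.factorial : ℝ) := by
        have := two_pow_mul_factorial_le (m - 1)
        rw [h1] at this
        exact_mod_cast this
      have hden : (0 : ℝ) < 2 ^ (m - 1) * ((m - 1).factorial : ℝ) := by positivity
      rw [div_mul_eq_mul_div, le_div_iff₀ hden]
      exact mul_le_mul_of_nonneg_left hfle (by positivity)
    calc t ^ (m - 1) ≤ _ := hterm
      _ ≤ H n := Finset.single_le_sum hHn_term_nonneg hmem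
  have hHn : M ^ n ≤ H n := by
    rcases le_total |x| (Real.sqrt t) with h | h
    · have : M = Real.sqrt t := max_eq_right h
      rw [this]
      have : Real.sqrt t ^ n = t ^ (m - 1) := by
        have : n = 2 * (m - 1) := by omega
        rw [this, pow_mul, Real.sq_sqrt ht0.le]
      rw [this]; exact hHn_ge_t
    · have hMx : M = |x| := max_eq_left h
      have : M ^ n = x ^ n := by
        rw [hMx, ← abs_pow, abs_of_nonneg]
        obtain ⟨r, hr⟩ : ∃ r, n = 2 * r := ⟨m - 1, by omega⟩
        rw [hr, pow_mul]; positivity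
      rw [this]; exact hHn_ge_xn
  -- upper bound on |H j| for j < n
  have hHj : ∀ j ∈ range n, |H j| ≤ ((2 * m + 1) * (2 * m).factorial) * M ^ (n - 1) := by
    intro j hj
    have hjn : j < n := Finset.mem_range.mp hj
    have hterm : ∀ k ∈ range (2 * m + 1),
        |a k * ((j.descFactorial (2 * k) : ℝ) * x ^ (j - 2 * k))|
          ≤ ((2 * m).factorial : ℝ) * M ^ (n - 1) := by
      intro k _
      rcases le_or_gt (2 * k) j with hkj | hkj
      · have h1 : |a k * ((j.descFactorial (2 * k) : ℝ) * x ^ (j - 2 * k))|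
            = a k * ((j.descFactorial (2 * k) : ℝ) * |x| ^ (j - 2 * k)) := by
          rw [abs_mul, abs_of_nonneg (ha0 k), abs_mul, abs_pow,
            abs_of_nonneg (by positivity : (0:ℝ) ≤ (j.descFactorial (2 * k) : ℝ))]
        rw [h1]
        have hak : a k ≤ M ^ (2 * k) := by
          have h2 : a k ≤ t ^ k := by
            rw [hadef]
            exact div_le_self (by positivity) (by
              have h3 : (1 : ℝ) ≤ (2 : ℝ) ^ k := one_le_pow₀ (by norm_num)
              have h4 : (1 : ℝ) ≤ (k.factorial : ℝ) := by exact_mod_cast k.factorial_pos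
              nlinarith)
          have h5 : Real.sqrt t ^ (2 * k) = t ^ k := by
            rw [pow_mul, Real.sq_sqrt ht0.le]
          rw [← h5] at h2
          exact le_trans h2 (pow_le_pow_left₀ (Real.sqrt_nonneg t) hsqrtM _)
        have hd : ((j.descFactorial (2 * k) : ℝ)) ≤ ((2 * m).factorial : ℝ) := by
          have hd1 : j.descFactorial (2 * k) ≤ j.factorial := by
            calc j.descFactorial (2 * k)
                ≤ (j - 2 * k).factorial * j.descFactorial (2 * k) :=
                  Nat.le_mul_of_pos_left _ (Nat.factorial_pos _)
              _ = j.factorial := Nat.factorial_mul_descFactorial hkj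
          have hd2 : j.factorial ≤ (2 * m).factorial := Nat.factorial_le (by omega)
          exact_mod_cast le_trans hd1 hd2
        have hx : |x| ^ (j - 2 * k) ≤ M ^ (j - 2 * k) :=
          pow_le_pow_left₀ (abs_nonneg x) hxM _
        calc a k * ((j.descFactorial (2 * k) : ℝ) * |x| ^ (j - 2 * k))
            ≤ M ^ (2 * k) * (((2 * m).factorial : ℝ) * M ^ (j - 2 * k)) := by
              refine mul_le_mul hak ?_ (by positivity) (by positivity)
              exact mul_le_mul hd hx (by positivity) (by positivity)
          _ = ((2 * m).factorial : ℝ) * M ^ (2 * k + (j - 2 * k)) := by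
              rw [pow_add]; ring
          _ ≤ ((2 * m).factorial : ℝ) * M ^ (n - 1) := by
              refine mul_le_mul_of_nonneg_left ?_ (by positivity)
              exact pow_le_pow_right₀ hM1 (by omega)
      · have : j.descFactorial (2 * k) = 0 := Nat.descFactorial_of_lt hkj
        rw [this]
        simp only [Nat.cast_zero, zero_mul, mul_zero, abs_zero]
        positivity
    calc |H j| ≤ ∑ k ∈ range (2 * m + 1),
          |a k * ((j.descFactorial (2 * k) : ℝ) * x ^ (j - 2 * k))| :=
            Finset.abs_sum_le_sum_abs _ _
      _ ≤ ∑ _k ∈ range (2 * m + 1), ((2 * m).factorial : ℝ) * M ^ (n - 1) :=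
            Finset.sum_le_sum hterm
      _ = ((2 * m + 1) * (2 * m).factorial) * M ^ (n - 1) := by
            rw [Finset.sum_const, Finset.card_range]
            push_cast; ring
  -- assemble
  rw [hS, Finset.sum_range_succ]
  have hlow : -(B * M ^ (n - 1)) ≤ ∑ j ∈ range n, q.coeff j * H j := by
    have habs : |∑ j ∈ range n, q.coeff j * H j| ≤ B * M ^ (n - 1) := by
      calc |∑ j ∈ range n, q.coeff j * H j|
          ≤ ∑ j ∈ range n, |q.coeff j * H j| := Finset.abs_sum_le_sum_abs _ _
        _ ≤ ∑ j ∈ range n, |q.coeff j| * (((2 * m + 1) * (2 * m).factorial) * M ^ (n - 1)) := by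
            refine Finset.sum_le_sum fun j hj => ?_
            rw [abs_mul]
            exact mul_le_mul_of_nonneg_left (hHj j hj) (abs_nonneg _)
        _ = B * M ^ (n - 1) := by
            rw [hBdef, Finset.sum_mul]
            exact Finset.sum_congr rfl fun j _ => by push_cast; ring
    linarith [(abs_le.mp habs).1]
  have hBM : B * M ^ (n - 1) ≤ c * M ^ n := by
    rcases Nat.eq_zero_or_pos n with hn0 | hn1
    · have hBz : B = 0 := by rw [hBdef, hn0]; simp
      rw [hBz, zero_mul]
      positivity
    · calc B * M ^ (n - 1) ≤ (c * M) * M ^ (n - 1) :=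
            mul_le_mul_of_nonneg_right hMc (by positivity)
        _ = c * M ^ (n - 1 + 1) := by rw [pow_succ]; ring
        _ = c * M ^ n := by rw [Nat.sub_add_cancel hn1]
  have hhigh : c * M ^ n ≤ c * H n := mul_le_mul_of_nonneg_left hHn hc.le
  have : c * H n = q.coeff n * H n := by rw [hcdef]
  linarith

theorem heatEvo_eventually_convex (p : Polynomial ℝ) (m : ℕ) (hm : 1 ≤ m)
    (hmonic : p.Monic) (hdeg : p.natDegree = 2 * m) :
    ∃ T : ℝ, ∀ t : ℝ, T < t → ConvexOn ℝ Set.univ (fun x : ℝ => heatEvo p x t) := by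
  set q : Polynomial ℝ := Polynomial.derivative (Polynomial.derivative p) with hqdef
  have hqdeg : q.natDegree < 2 * m - 1 := by
    have h1 : q.natDegree ≤ 2 * m - 2 := by
      calc q.natDegree ≤ (Polynomial.derivative p).natDegree - 1 :=
            Polynomial.natDegree_derivative_le _
        _ ≤ p.natDegree - 1 - 1 := by
            have := Polynomial.natDegree_derivative_le p; omega
        _ = 2 * m - 2 := by rw [hdeg]; omega
    exact lt_of_le_of_lt h1 (by omega)
  have hqc : 0 < q.coeff (2 * m - 2) := by
    rw [hqdef, Polynomial.coeff_derivative, Polynomial.coeff_derivative]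
    have h1 : 2 * m - 2 + 1 + 1 = 2 * m := by omega
    rw [h1]
    have h2 : p.coeff (2 * m) = 1 := by
      have := hmonic.coeff_natDegree
      rwa [hdeg] at this
    rw [h2, one_mul]
    positivity
  obtain ⟨T, hT⟩ := key m hm q hqdeg hqc
  refine ⟨T, fun t ht => ?_⟩
  set Pt : Polynomial ℝ := ∑ k ∈ Finset.range (2 * m + 1),
      Polynomial.C (t ^ k / (2 ^ k * (Nat.factorial k))) * Polynomial.derivative^[2 * k] p
    with hPtdef
  have hf : (fun x : ℝ => heatEvo p x t) = fun x : ℝ => Pt.eval x := by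
    funext x
    rw [heatEvo, hdeg, hPtdef, Polynomial.eval_finset_sum]
    exact Finset.sum_congr rfl fun k _ => by rw [Polynomial.eval_mul, Polynomial.eval_C]
  have hcomm : ∀ (r : Polynomial ℝ) (k : ℕ),
      Polynomial.derivative (Polynomial.derivative (Polynomial.derivative^[k] r))
        = Polynomial.derivative^[k] (Polynomial.derivative (Polynomial.derivative r)) := by
    intro r k
    rw [← Function.iterate_succ_apply' Polynomial.derivative k r,
        ← Function.iterate_succ_apply' Polynomial.derivative (k + 1) r,
        ← Function.iterate_succ_apply Polynomial.derivative k,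
        ← Function.iterate_succ_apply Polynomial.derivative (k + 1)]
  have hPt2 : Polynomial.derivative (Polynomial.derivative Pt)
      = ∑ k ∈ Finset.range (2 * m + 1),
          Polynomial.C (t ^ k / (2 ^ k * (Nat.factorial k))) * Polynomial.derivative^[2 * k] q := by
    rw [hPtdef, map_sum, map_sum]
    refine Finset.sum_congr rfl fun k _ => ?_
    rw [Polynomial.derivative_C_mul, Polynomial.derivative_C_mul, hqdef, hcomm]
  have hderiv1 : deriv (fun x : ℝ => Pt.eval x) = fun x : ℝ => (Polynomial.derivative Pt).eval x := by
    funext x; exact Polynomial.deriv Pt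
  have hderiv2 : ∀ x : ℝ, deriv^[2] (fun x : ℝ => Pt.eval x) x
      = (Polynomial.derivative (Polynomial.derivative Pt)).eval x := by
    intro x
    have : deriv^[2] (fun x : ℝ => Pt.eval x)
        = deriv (deriv (fun x : ℝ => Pt.eval x)) := rfl
    rw [this, hderiv1]
    exact Polynomial.deriv _
  rw [hf]
  refine convexOn_univ_of_deriv2_nonneg (Polynomial.differentiable Pt) ?_ ?_
  · rw [hderiv1]; exact Polynomial.differentiable _
  · intro x
    rw [hderiv2 x, hPt2, Polynomial.eval_finset_sum]
    have := hT t ht x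
    calc (0:ℝ) ≤ _ := this
      _ = _ := Finset.sum_congr rfl fun k _ => by
            rw [Polynomial.eval_mul, Polynomial.eval_C]
end

section
/- Let p be a real polynomial with heat evolution P(x,t), and let x : ℝ → ℝ be continuous on [t₀,t₁] and differentiable on (t₀,t₁) with ∂P/∂x(x(t),t) = 0 for every t ∈ (t₀,t₁). Then for every t ∈ (t₀,t₁), the function t ↦ P(x(t),t) has derivative equal to (1/2)·∂²P/∂x²(x(t),t). Consequently, if ∂²P/∂x²(x(t),t) ≥ 0 for all t ∈ (t₀,t₁) then P(x(t₁),t₁) ≥ P(x(t₀),t₀), and if ∂²P/∂x²(x(t),t) ≤ 0 for all t ∈ (t₀,t₁) then P(x(t₁),t₁) ≤ P(x(t₀),t₀). -/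
/-!
Along a curve `s ↦ (x s, s)` the chain rule gives `d/ds P = ∂ₓP · x' + ∂ₜP`, and `P` solves the
heat equation `∂ₜP = ½ ∂ₓ²P`. On a curve of critical points of `P(·, s)` the transport term
vanishes, so `s ↦ P(x s, s)` moves with speed `½ ∂ₓ²P`, and the comparison inequalities follow
from the monotonicity criterion of the mean value theorem.
-/

open Polynomial Finset

section

variable (p : ℝ[X])

theorem heatEvo_eq_sum_range {n : ℕ} (hn : p.natDegree < n) (y t : ℝ) :
    heatEvo p y t =
      ∑ k ∈ range n, t ^ k / (2 ^ k * k.factorial) * (derivative^[2 * k] p).eval y := by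
  refine sum_subset (range_subset_range.2 hn) fun k _ hk => ?_
  rw [mem_range, not_lt] at hk
  rw [iterate_derivative_eq_zero (by omega), eval_zero, mul_zero]

theorem heatEvo_iterate_derivative (m : ℕ) (y t : ℝ) :
    heatEvo (derivative^[m] p) y t =
      ∑ k ∈ range (p.natDegree + 1),
        t ^ k / (2 ^ k * k.factorial) * (derivative^[2 * k + m] p).eval y := by
  have hdeg : (derivative^[m] p).natDegree < p.natDegree + 1 :=
    (natDegree_iterate_derivative p m).trans_lt (by omega)
  simp only [heatEvo_eq_sum_range _ hdeg, Function.iterate_add_apply]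

theorem heatEvo_derivative (y t : ℝ) :
    heatEvo (derivative p) y t =
      ∑ k ∈ range (p.natDegree + 1),
        t ^ k / (2 ^ k * k.factorial) * (derivative^[2 * k + 1] p).eval y :=
  heatEvo_iterate_derivative p 1 y t

theorem hasDerivAt_heatEvo_space (t y : ℝ) :
    HasDerivAt (fun y => heatEvo p y t) (heatEvo (derivative p) y t) y := by
  rw [heatEvo_derivative]
  refine HasDerivAt.fun_sum fun k _ => ?_
  have hpoly := (derivative^[2 * k] p).hasDerivAt y
  rw [← Function.iterate_succ_apply' derivative] at hpoly
  exact hpoly.const_mul _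

theorem deriv_heatEvo_space (t : ℝ) :
    deriv (fun y => heatEvo p y t) = fun y => heatEvo (derivative p) y t :=
  funext fun y => (hasDerivAt_heatEvo_space p t y).deriv

-- The heat equation `∂ₜP = ½ ∂ₓ²P`, with `∂ₜP` written as the termwise derivative of `heatEvo`.
theorem sum_time_deriv_heatEvo_eq (y t : ℝ) :
    ∑ k ∈ range (p.natDegree + 1),
        (k * t ^ (k - 1)) / (2 ^ k * k.factorial) * (derivative^[2 * k] p).eval y =
      1 / 2 * heatEvo (derivative (derivative p)) y t := by
  rw [show heatEvo (derivative (derivative p)) y t = _ from heatEvo_iterate_derivative p 2 y t,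
    sum_range_succ', sum_range_succ,
    iterate_derivative_eq_zero (by omega : p.natDegree < 2 * p.natDegree + 2)]
  simp only [CharP.cast_eq_zero, zero_mul, zero_div, eval_zero, mul_zero, add_zero, mul_sum]
  refine sum_congr rfl fun k _ => ?_
  rw [Nat.add_sub_cancel, Nat.factorial_succ, pow_succ, mul_add_one]
  push_cast
  field_simp

theorem hasDerivAt_heatEvo_comp {x : ℝ → ℝ} {x' t : ℝ} (hx : HasDerivAt x x' t) :
    HasDerivAt (fun s => heatEvo p (x s) s)
      (heatEvo (derivative p) (x t) t * x' + 1 / 2 * heatEvo (derivative (derivative p)) (x t) t)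
      t := by
  have hterm : ∀ k ∈ range (p.natDegree + 1),
      HasDerivAt (fun s => s ^ k / (2 ^ k * k.factorial) * (derivative^[2 * k] p).eval (x s))
        ((k * t ^ (k - 1)) / (2 ^ k * k.factorial) * (derivative^[2 * k] p).eval (x t) +
          t ^ k / (2 ^ k * k.factorial) * ((derivative^[2 * k + 1] p).eval (x t) * x')) t := by
    intro k _
    have hpoly := ((derivative^[2 * k] p).hasDerivAt (x t)).comp t hx
    rw [← Function.iterate_succ_apply' derivative] at hpoly
    exact ((hasDerivAt_pow k t).div_const _).mul hpoly
  refine (HasDerivAt.fun_sum hterm).congr_deriv ?_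
  rw [sum_add_distrib, sum_time_deriv_heatEvo_eq, heatEvo_derivative p, sum_mul, add_comm]
  simp only [mul_assoc]

theorem continuousOn_heatEvo_comp {x : ℝ → ℝ} {s : Set ℝ} (hx : ContinuousOn x s) :
    ContinuousOn (fun t => heatEvo p (x t) t) s := by
  unfold heatEvo
  fun_prop

end

theorem heatEvo_comparison_principle (p : Polynomial ℝ) (x : ℝ → ℝ) (t₀ t₁ : ℝ)
    (hle : t₀ ≤ t₁)
    (hcont : ContinuousOn x (Set.Icc t₀ t₁))
    (hdiff : ∀ t ∈ Set.Ioo t₀ t₁, DifferentiableAt ℝ x t)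
    (hcrit : ∀ t ∈ Set.Ioo t₀ t₁, deriv (fun y : ℝ => heatEvo p y t) (x t) = 0) :
    (∀ t ∈ Set.Ioo t₀ t₁,
      HasDerivAt (fun s : ℝ => heatEvo p (x s) s)
        ((1 / 2) * deriv (deriv (fun y : ℝ => heatEvo p y t)) (x t)) t) ∧
    ((∀ t ∈ Set.Ioo t₀ t₁, 0 ≤ deriv (deriv (fun y : ℝ => heatEvo p y t)) (x t)) →
      heatEvo p (x t₀) t₀ ≤ heatEvo p (x t₁) t₁) ∧
    ((∀ t ∈ Set.Ioo t₀ t₁, deriv (deriv (fun y : ℝ => heatEvo p y t)) (x t) ≤ 0) →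
      heatEvo p (x t₁) t₁ ≤ heatEvo p (x t₀) t₀) := by
  have hspeed : ∀ t ∈ Set.Ioo t₀ t₁,
      HasDerivAt (fun s : ℝ => heatEvo p (x s) s)
        ((1 / 2) * deriv (deriv (fun y : ℝ => heatEvo p y t)) (x t)) t := by
    intro t ht
    have hcrit_t := hcrit t ht
    simp only [deriv_heatEvo_space] at hcrit_t ⊢
    simpa only [hcrit_t, zero_mul, zero_add] using
      hasDerivAt_heatEvo_comp p (hdiff t ht).hasDerivAt
  have hspeed_within : ∀ t ∈ interior (Set.Icc t₀ t₁),
      HasDerivWithinAt (fun s : ℝ => heatEvo p (x s) s)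
        ((1 / 2) * deriv (deriv (fun y : ℝ => heatEvo p y t)) (x t))
        (interior (Set.Icc t₀ t₁)) t := by
    rw [interior_Icc]
    exact fun t ht => (hspeed t ht).hasDerivWithinAt
  have hg := continuousOn_heatEvo_comp p hcont
  have ht₀ : t₀ ∈ Set.Icc t₀ t₁ := Set.left_mem_Icc.2 hle
  have ht₁ : t₁ ∈ Set.Icc t₀ t₁ := Set.right_mem_Icc.2 hle
  refine ⟨hspeed, fun hconvex => ?_, fun hconcave => ?_⟩
  · refine monotoneOn_of_hasDerivWithinAt_nonneg (convex_Icc t₀ t₁) hg hspeed_within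
      (fun t ht => ?_) ht₀ ht₁ hle
    exact mul_nonneg one_half_pos.le (hconvex t (by rwa [interior_Icc] at ht))
  · refine antitoneOn_of_hasDerivWithinAt_nonpos (convex_Icc t₀ t₁) hg hspeed_within
      (fun t ht => ?_) ht₀ ht₁ hle
    exact mul_nonpos_of_nonneg_of_nonpos one_half_pos.le
      (hconcave t (by rwa [interior_Icc] at ht))
end

section
/- Let a,b,c be real numbers and define f(t) = b/2 − 3a²/16 + 3t, g(t) = a³/32 − ab/8 + c/4, and the discriminant Δ(t) = g(t)²/4 + f(t)³/27 of the cubic x³ + (3a/4)x² + ((b+6t)/2)x + (c+3at)/4. Then: (i) for every real t, Δ(t) = ((a³−4ab+8c)/64)² + ((−3a²+8b)/48 + t)³; (ii) Δ is strictly increasing on ℝ and tends to +∞ as t → +∞; (iii) Δ(t) = 0 if and only if t = t_u, where t_u = a²/16 − b/6 − (1/16)·((a³−4ab+8c)²)^{1/3}. -/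
/-! In the coordinate `s + t`, with `s = (8b - 3a²)/48`, the discriminant is the depressed
cubic `(M/64)² + (s + t)³`, `M = a³ - 4ab + 8c`: a nonnegative constant plus an odd power.
Hence it is strictly increasing and unbounded, and its unique zero is `s + t = -((M/64)²)^{1/3}
= -(M²)^{1/3}/16`. -/

open Filter

section OddPower

variable {R : Type*} [CommRing R] [LinearOrder R] [IsStrictOrderedRing R]

theorem strictMono_const_add_add_pow (C s : R) {n : ℕ} (hn : Odd n) :
    StrictMono fun t : R => C + (s + t) ^ n :=
  fun _ _ h => add_lt_add_right (hn.strictMono_pow (add_lt_add_right h s)) C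

theorem tendsto_const_add_add_pow_atTop (C s : R) {n : ℕ} (hn : n ≠ 0) :
    Tendsto (fun t : R => C + (s + t) ^ n) atTop atTop :=
  tendsto_atTop_add_const_left _ C <|
    (tendsto_pow_atTop hn).comp (tendsto_atTop_add_const_left _ s tendsto_id)

end OddPower

theorem add_pow_three_eq_zero_iff {y z : ℝ} (hy : 0 ≤ y) :
    y + z ^ 3 = 0 ↔ z = -y ^ ((1 : ℝ) / 3) := by
  have hcube : (-y ^ ((1 : ℝ) / 3)) ^ 3 = -y := by
    have := Real.rpow_inv_natCast_pow hy (n := 3) three_ne_zero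
    rw [Nat.cast_ofNat, ← one_div] at this
    rw [neg_pow, this]; ring
  calc y + z ^ 3 = 0 ↔ z ^ 3 = (-y ^ ((1 : ℝ) / 3)) ^ 3 := by
        rw [hcube, eq_neg_iff_add_eq_zero, add_comm]
    _ ↔ z = -y ^ ((1 : ℝ) / 3) :=
        (Odd.strictMono_pow (R := ℝ) (by decide : Odd 3)).injective.eq_iff

theorem rpow_one_third_div_pow_three {x k : ℝ} (hx : 0 ≤ x) (hk : 0 ≤ k) :
    (x / k ^ 3) ^ ((1 : ℝ) / 3) = x ^ ((1 : ℝ) / 3) / k := by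
  simpa [Real.div_rpow hx (pow_nonneg hk 3)] using
    congrArg (x ^ ((1 : ℝ) / 3) / ·) (Real.pow_rpow_inv_natCast hk (n := 3) three_ne_zero)

theorem quartic_fingerprint_discriminant (a b c : ℝ) :
    let f : ℝ → ℝ := fun t => b / 2 - 3 * a ^ 2 / 16 + 3 * t
    let g : ℝ → ℝ := fun _ => a ^ 3 / 32 - a * b / 8 + c / 4
    let Δ : ℝ → ℝ := fun t => (g t) ^ 2 / 4 + (f t) ^ 3 / 27
    let tu : ℝ := a ^ 2 / 16 - b / 6
      - (1 / 16) * ((a ^ 3 - 4 * a * b + 8 * c) ^ 2) ^ ((1 : ℝ) / 3)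
    (∀ t : ℝ, Δ t = ((a ^ 3 - 4 * a * b + 8 * c) / 64) ^ 2
        + ((-3 * a ^ 2 + 8 * b) / 48 + t) ^ 3) ∧
    StrictMono Δ ∧
    Filter.Tendsto Δ Filter.atTop Filter.atTop ∧
    (∀ t : ℝ, Δ t = 0 ↔ t = tu) := by
  intro f g Δ tu
  set M := a ^ 3 - 4 * a * b + 8 * c
  set s := (-3 * a ^ 2 + 8 * b) / 48
  have hΔ : Δ = fun t => (M / 64) ^ 2 + (s + t) ^ 3 := by
    funext t; simp only [Δ, f, g, M, s]; ring
  refine ⟨congrFun hΔ, hΔ ▸ strictMono_const_add_add_pow _ _ (by decide),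
    hΔ ▸ tendsto_const_add_add_pow_atTop _ _ three_ne_zero, fun t => ?_⟩
  have hM : (M / 64) ^ 2 = M ^ 2 / 16 ^ 3 := by ring
  rw [hΔ, add_pow_three_eq_zero_iff (sq_nonneg _), hM,
    rpow_one_third_div_pow_three (sq_nonneg M) (by norm_num)]
  constructor <;> intro h <;> simp only [tu, s] at h ⊢ <;> linarith
end

section
/- Let a,b,c be real and set q_t(x) = 4x³ + 3ax² + (2b+12t)x + (c+3at), and t_u = a²/16 − b/6 − (1/16)·((a³−4ab+8c)²)^{1/3}. Then: (i) for every t > t_u, q_t has exactly one real root; (ii) for every t < t_u, q_t has exactly three pairwise distinct real roots; (iii) q_{t_u} has a repeated real root r, and this repeated root satisfies (r + a/4)³ = (a³ − 4ab + 8c)/64. -/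
lemma dpair {P E x y : ℝ} (hx : 4*x^3 + P*x + E = 0) (hy : 4*y^3 + P*y + E = 0)
    (hxy : x ≠ y) : 4*(x^2 + x*y + y^2) + P = 0 := by
  have h := sub_ne_zero.mpr hxy
  have h2 : (x - y) * (4*(x^2 + x*y + y^2) + P) = 0 := by linear_combination hx - hy
  rcases mul_eq_zero.mp h2 with h3 | h3
  · exact absurd h3 h
  · exact h3

lemma cube_lt {x y : ℝ} (h : x < y) : x^3 < y^3 :=
  Odd.strictMono_pow (by decide : Odd 3) h

lemma dcubic_exists (P E : ℝ) : ∃ y : ℝ, 4*y^3 + P*y + E = 0 := by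
  set M : ℝ := |P| + |E| + 1 with hM
  have hM1 : (1:ℝ) ≤ M := by have := abs_nonneg P; have := abs_nonneg E; simp [hM]; linarith
  have hMp : (0:ℝ) < M := by linarith
  have hPM : |P| ≤ M := by have := abs_nonneg E; simp [hM]; linarith
  have hEM : |E| ≤ M := by have := abs_nonneg P; simp [hM]; linarith
  have h2 : 4*M^3 + P*M + E > 0 := by
    nlinarith [neg_abs_le P, neg_abs_le E, hPM, hEM, hM1, hMp, sq_nonneg M,
      mul_le_mul_of_nonneg_right hPM hMp.le, mul_le_mul_of_nonneg_right (neg_abs_le P) hMp.le]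
  have h3 : 4*(-M)^3 + P*(-M) + E < 0 := by
    nlinarith [le_abs_self P, le_abs_self E, hPM, hEM, hM1, hMp, sq_nonneg M,
      mul_le_mul_of_nonneg_right hPM hMp.le, mul_le_mul_of_nonneg_right (neg_le_abs P) hMp.le]
  have hc : Continuous fun y : ℝ => 4*y^3 + P*y + E := by fun_prop
  obtain ⟨y, -, hy⟩ := intermediate_value_Icc (show -M ≤ M by linarith) hc.continuousOn
    (Set.mem_Icc.mpr ⟨h3.le, h2.le⟩)
  exact ⟨y, hy⟩



lemma dcubic_one (P E : ℝ) (hD : 0 < 27*E^2 + P^3) : ∃! y : ℝ, 4*y^3 + P*y + E = 0 := by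
  obtain ⟨y, hy⟩ := dcubic_exists P E
  refine ⟨y, hy, fun z hz => ?_⟩
  by_contra hne
  have hpair := dpair hz hy hne
  have hS : P = -4*(z^2 + z*y + y^2) := by linarith
  have hE : E = 4*z*y*(z+y) := by linear_combination hz - z * hpair
  rw [hS, hE] at hD
  nlinarith [sq_nonneg ((z - y)*(2*z + y)*(z + 2*y)), hD]

lemma dcubic_three (P E : ℝ) (hD : 27*E^2 + P^3 < 0) :
    ∃ y1 y2 y3 : ℝ, y1 < y2 ∧ y2 < y3 ∧
      ∀ y : ℝ, 4*y^3 + P*y + E = 0 ↔ (y = y1 ∨ y = y2 ∨ y = y3) := by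
  have hP : P < 0 := by
    by_contra h
    push_neg at h
    nlinarith [pow_nonneg h 3, sq_nonneg E]
  set m := Real.sqrt (-P/12) with hm
  have hm2 : m^2 = -P/12 := Real.sq_sqrt (by linarith)
  have hm0 : 0 < m := Real.sqrt_pos.mpr (by linarith)
  have hPm : P = -12*m^2 := by linarith
  have hP3 : P^3 = -1728*m^6 := by rw [hPm]; ring
  have h6 : E^2 < 64*m^6 := by linarith
  have h7 : |E| < 8*m^3 := by
    have h8 : |E|^2 < (8*m^3)^2 := by rw [sq_abs]; nlinarith [h6]
    exact lt_of_pow_lt_pow_left₀ 2 (by positivity) h8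
  obtain ⟨hE1, hE2⟩ := abs_lt.mp h7
  -- values of the cubic at -3m, -m, m, 3m
  have v1 : 4*(-(3*m))^3 + P*(-(3*m)) + E < 0 := by rw [hPm]; nlinarith [hE2]
  have v2 : 0 < 4*(-m)^3 + P*(-m) + E := by rw [hPm]; nlinarith [hE1]
  have v3 : 4*m^3 + P*m + E < 0 := by rw [hPm]; nlinarith [hE2]
  have v4 : 0 < 4*(3*m)^3 + P*(3*m) + E := by rw [hPm]; nlinarith [hE1]
  have hc : Continuous fun y : ℝ => 4*y^3 + P*y + E := by fun_prop
  obtain ⟨y1, hy1m, hy1⟩ := intermediate_value_Ioo (show -(3*m) ≤ -m by linarith)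
    hc.continuousOn (Set.mem_Ioo.mpr ⟨v1, v2⟩)
  obtain ⟨y2, hy2m, hy2⟩ := intermediate_value_Ioo' (show -m ≤ m by linarith)
    hc.continuousOn (Set.mem_Ioo.mpr ⟨v3, v2⟩)
  obtain ⟨y3, hy3m, hy3⟩ := intermediate_value_Ioo (show m ≤ 3*m by linarith)
    hc.continuousOn (Set.mem_Ioo.mpr ⟨v3, v4⟩)
  have hy1' : 4*y1^3 + P*y1 + E = 0 := hy1
  have hy2' : 4*y2^3 + P*y2 + E = 0 := hy2
  have hy3' : 4*y3^3 + P*y3 + E = 0 := hy3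
  have o12 : y1 < y2 := lt_trans hy1m.2 hy2m.1
  have o23 : y2 < y3 := lt_trans hy2m.2 hy3m.1
  refine ⟨y1, y2, y3, o12, o23, fun y => ⟨fun hy => ?_, ?_⟩⟩
  · by_contra hn
    push_neg at hn
    obtain ⟨n1, n2, n3⟩ := hn
    have p1 := dpair hy hy1' n1
    have p2 := dpair hy hy2' n2
    have p3 := dpair hy hy3' n3
    have e23 : (y2 - y3) * (4*(y + y2 + y3)) = 0 := by linear_combination p2 - p3
    have e13 : (y1 - y3) * (4*(y + y1 + y3)) = 0 := by linear_combination p1 - p3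
    have s23 : y + y2 + y3 = 0 := by
      rcases mul_eq_zero.mp e23 with h | h
      · exact absurd h (sub_ne_zero.mpr o23.ne)
      · linarith
    have s13 : y + y1 + y3 = 0 := by
      rcases mul_eq_zero.mp e13 with h | h
      · exact absurd h (sub_ne_zero.mpr (lt_trans o12 o23).ne)
      · linarith
    exact absurd (by linarith : y1 = y2) o12.ne
  · rintro (rfl | rfl | rfl) <;> assumption


theorem quartic_fingerprint_structure (a b c : ℝ) :
    let q : ℝ → ℝ → ℝ := fun t x =>
      4 * x ^ 3 + 3 * a * x ^ 2 + (2 * b + 12 * t) * x + (c + 3 * a * t)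
    let tu : ℝ := a ^ 2 / 16 - b / 6
      - (1 / 16) * ((a ^ 3 - 4 * a * b + 8 * c) ^ 2) ^ ((1 : ℝ) / 3)
    (∀ t : ℝ, tu < t → ∃! x : ℝ, q t x = 0) ∧
    (∀ t : ℝ, t < tu → ∃ x₁ x₂ x₃ : ℝ, x₁ ≠ x₂ ∧ x₁ ≠ x₃ ∧ x₂ ≠ x₃ ∧
      ∀ x : ℝ, q t x = 0 ↔ (x = x₁ ∨ x = x₂ ∨ x = x₃)) ∧
    (∃ r : ℝ, q tu r = 0 ∧ 12 * r ^ 2 + 6 * a * r + (2 * b + 12 * tu) = 0 ∧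
      (r + a / 4) ^ 3 = (a ^ 3 - 4 * a * b + 8 * c) / 64) := by
  intro q tu
  have hq : ∀ t x : ℝ, q t x = 4*x^3 + 3*a*x^2 + (2*b + 12*t)*x + (c + 3*a*t) :=
    fun _ _ => rfl
  obtain ⟨u, hu0, hu3, htu⟩ : ∃ u : ℝ, 0 ≤ u ∧ u^3 = (a^3 - 4*a*b + 8*c)^2 ∧
      tu = a^2/16 - b/6 - u/16 := by
    refine ⟨((a ^ 3 - 4 * a * b + 8 * c) ^ 2) ^ ((1 : ℝ) / 3),
      Real.rpow_nonneg (sq_nonneg _) _, ?_, ?_⟩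
    · rw [← Real.rpow_natCast (((a ^ 3 - 4 * a * b + 8 * c) ^ 2) ^ ((1 : ℝ) / 3)) 3,
        ← Real.rpow_mul (sq_nonneg _)]
      norm_num
    · show a ^ 2 / 16 - b / 6 - (1 / 16) * ((a ^ 3 - 4 * a * b + 8 * c) ^ 2) ^ ((1 : ℝ) / 3) = _
      ring
  refine ⟨?_, ?_, ?_⟩
  · -- one root regime
    intro t ht
    rw [htu] at ht
    have hPu : -3*u/4 < 12*t + 2*b - 3*a^2/4 := by linarith
    have hcu := cube_lt hPu
    have hD : 0 < 27*((a^3 - 4*a*b + 8*c)/8)^2 + (12*t + 2*b - 3*a^2/4)^3 := by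
      nlinarith [hcu, hu3]
    obtain ⟨y, hy, hyu⟩ := dcubic_one (12*t + 2*b - 3*a^2/4) ((a^3 - 4*a*b + 8*c)/8) hD
    refine ⟨y - a/4, ?_, fun x hx => ?_⟩
    · show q t (y - a/4) = 0
      rw [hq]; linear_combination hy
    · have hx2 : q t x = 0 := hx
      rw [hq] at hx2
      rename' hx2 => hx
      have hx' : 4*(x + a/4)^3 + (12*t + 2*b - 3*a^2/4)*(x + a/4)
          + (a^3 - 4*a*b + 8*c)/8 = 0 := by linear_combination hx
      have := hyu (x + a/4) hx'
      linarith
  · -- three root regime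
    intro t ht
    rw [htu] at ht
    have hPu : 12*t + 2*b - 3*a^2/4 < -3*u/4 := by linarith
    have hcu := cube_lt hPu
    have hD : 27*((a^3 - 4*a*b + 8*c)/8)^2 + (12*t + 2*b - 3*a^2/4)^3 < 0 := by
      nlinarith [hcu, hu3]
    obtain ⟨y1, y2, y3, o12, o23, hiff⟩ :=
      dcubic_three (12*t + 2*b - 3*a^2/4) ((a^3 - 4*a*b + 8*c)/8) hD
    refine ⟨y1 - a/4, y2 - a/4, y3 - a/4,
      fun h => o12.ne (by linarith [sub_left_inj.mp h]),
      fun h => (lt_trans o12 o23).ne (by linarith [sub_left_inj.mp h]),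
      fun h => o23.ne (by linarith [sub_left_inj.mp h]), fun x => ?_⟩
    rw [hq]
    constructor
    · intro hx
      have hx' : 4*(x + a/4)^3 + (12*t + 2*b - 3*a^2/4)*(x + a/4)
          + (a^3 - 4*a*b + 8*c)/8 = 0 := by linear_combination hx
      rcases (hiff (x + a/4)).mp hx' with h | h | h
      · exact Or.inl (by linarith)
      · exact Or.inr (Or.inl (by linarith))
      · exact Or.inr (Or.inr (by linarith))
    · have r1 := (hiff y1).mpr (Or.inl rfl)
      have r2 := (hiff y2).mpr (Or.inr (Or.inl rfl))
      have r3 := (hiff y3).mpr (Or.inr (Or.inr rfl))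
      rintro (rfl | rfl | rfl)
      · linear_combination r1
      · linear_combination r2
      · linear_combination r3
  · -- double root at t = tu
    obtain ⟨s, hs3, hs2⟩ : ∃ s : ℝ, s^3 = (a^3 - 4*a*b + 8*c)/64 ∧ s^2 = u/16 := by
      by_cases hK : a^3 - 4*a*b + 8*c = 0
      · have hu00 : u = 0 := by
          have h3 : u^3 = 0 := by rw [hu3, hK]; ring
          exact pow_eq_zero_iff (by norm_num : (3:ℕ) ≠ 0) |>.mp h3
        exact ⟨0, by rw [hK]; ring, by rw [hu00]; ring⟩
      · have hune : u ≠ 0 := fun h =>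
          hK (pow_eq_zero_iff (by norm_num : (2:ℕ) ≠ 0) |>.mp (by rw [← hu3, h]; ring))
        refine ⟨(a^3 - 4*a*b + 8*c)/(4*u), ?_, ?_⟩
        · rw [div_pow, show (4*u)^3 = 64*u^3 by ring, hu3]
          field_simp [hK]
        · rw [div_pow, show (4*u)^2 = 16*u^2 by ring, ← hu3]
          field_simp [hune]
    refine ⟨s - a/4, ?_, ?_, ?_⟩
    · show q tu (s - a/4) = 0
      rw [hq, htu]
      linear_combination (-8) * hs3 + 12*s * hs2
    · rw [htu]
      linear_combination 12 * hs2
    · linear_combination hs3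
end

section
/- Let a,b,c be real numbers and set t_u = a²/16 − b/6 − (1/16)·((a³−4ab+8c)²)^{1/3}. If real numbers x and t satisfy both 4x³ + 3ax² + (2b+12t)x + (c+3at) = 0 and 12x² + 6ax + 2b + 12t = 0, then (x + a/4)³ = (a³ − 4ab + 8c)/64 and t = t_u. -/
theorem quartic_FP1_inter_FP2 (a b c : ℝ) (x t : ℝ)
    (h1 : 4 * x ^ 3 + 3 * a * x ^ 2 + (2 * b + 12 * t) * x + (c + 3 * a * t) = 0)
    (h2 : 12 * x ^ 2 + 6 * a * x + 2 * b + 12 * t = 0) :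
    (x + a / 4) ^ 3 = (a ^ 3 - 4 * a * b + 8 * c) / 64 ∧
    t = a ^ 2 / 16 - b / 6
      - (1 / 16) * ((a ^ 3 - 4 * a * b + 8 * c) ^ 2) ^ ((1 : ℝ) / 3) := by
  have hu3 : (x + a / 4) ^ 3 = (a ^ 3 - 4 * a * b + 8 * c) / 64 := by
    linear_combination (-1/8) * h1 + (x/8 + a/32) * h2
  refine ⟨hu3, ?_⟩
  have key : (a ^ 3 - 4 * a * b + 8 * c) ^ 2 = (16 * (x + a / 4) ^ 2) ^ 3 := by
    linear_combination (-4096 * ((x + a/4)^3 + (a^3 - 4*a*b + 8*c)/64)) * hu3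
  have h16 : (0:ℝ) ≤ 16 * (x + a / 4) ^ 2 := by positivity
  have hroot : ((a ^ 3 - 4 * a * b + 8 * c) ^ 2) ^ ((1 : ℝ) / 3)
      = 16 * (x + a / 4) ^ 2 := by
    rw [key]
    have : ((1:ℝ)/3) = ((3:ℕ):ℝ)⁻¹ := by norm_num
    rw [this, Real.pow_rpow_inv_natCast h16 (by norm_num)]
  rw [hroot]
  nlinarith [h2]
end

section
/- Let p(x) = x⁴ + ax³ + bx² + cx + d with real coefficients, and suppose its derivative factors as p'(x) = 4(x−x₁)(x−x₂)(x−x₃) for real numbers x₁, x₂, x₃. Then p(x₃) − p(x₁) = −(x₃ − x₁)³·(x₁ + x₃ − 2x₂)/3. -/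
theorem quartic_value_difference_at_critical_points (a b c d x₁ x₂ x₃ : ℝ)
    (h : ∀ x : ℝ, 4 * x ^ 3 + 3 * a * x ^ 2 + 2 * b * x + c
      = 4 * (x - x₁) * (x - x₂) * (x - x₃)) :
    (x₃ ^ 4 + a * x₃ ^ 3 + b * x₃ ^ 2 + c * x₃ + d)
      - (x₁ ^ 4 + a * x₁ ^ 3 + b * x₁ ^ 2 + c * x₁ + d)
    = -(x₃ - x₁) ^ 3 * (x₁ + x₃ - 2 * x₂) / 3 := by
  have h0 := h 0
  have h1 := h 1
  have hm := h (-1)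
  have hc : c = -4 * (x₁ * x₂ * x₃) := by nlinarith [h0]
  have hb : b = 2 * (x₁ * x₂ + x₁ * x₃ + x₂ * x₃) := by nlinarith [h1, hm, hc]
  have ha : a = -4 * (x₁ + x₂ + x₃) / 3 := by nlinarith [h1, hm, hc, hb]
  subst ha hb hc
  ring
end

section
/- Let p(x) = x⁴ + ax³ + bx² + cx + d with real coefficients, and suppose its derivative factors as p'(x) = 4(x−x₁)(x−x₂)(x−x₃) for real numbers x₁, x₂, x₃ with x₁ ≠ x₃. Then p(x₁) = p(x₃) if and only if x₁ + x₃ = 2x₂. -/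
theorem quartic_equal_values_iff (a b c d x₁ x₂ x₃ : ℝ) (hne : x₁ ≠ x₃)
    (h : ∀ x : ℝ, 4 * x ^ 3 + 3 * a * x ^ 2 + 2 * b * x + c
      = 4 * (x - x₁) * (x - x₂) * (x - x₃)) :
    x₁ ^ 4 + a * x₁ ^ 3 + b * x₁ ^ 2 + c * x₁ + d
      = x₃ ^ 4 + a * x₃ ^ 3 + b * x₃ ^ 2 + c * x₃ + d
    ↔ x₁ + x₃ = 2 * x₂ := by
  have h0 := h 0
  have h1 := h 1
  have h2 := h (-1)
  have ha : 3 * a = -4 * (x₁ + x₂ + x₃) := by linarith [h0, h1, h2]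
  have hb : 2 * b = 4 * (x₁ * x₂ + x₁ * x₃ + x₂ * x₃) := by nlinarith [h0, h1, h2]
  have hc : c = -4 * (x₁ * x₂ * x₃) := by nlinarith [h0, h1, h2]
  have key : 3 * ((x₁ ^ 4 + a * x₁ ^ 3 + b * x₁ ^ 2 + c * x₁ + d)
      - (x₃ ^ 4 + a * x₃ ^ 3 + b * x₃ ^ 2 + c * x₃ + d))
      = -(x₁ - x₃) ^ 3 * (x₁ + x₃ - 2 * x₂) := by
    linear_combination (x₁ ^ 3 - x₃ ^ 3) * ha + (3 / 2 * (x₁ ^ 2 - x₃ ^ 2)) * hb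
      + (3 * (x₁ - x₃)) * hc
  have hcube : (x₁ - x₃) ^ 3 ≠ 0 := pow_ne_zero _ (sub_ne_zero.mpr hne)
  constructor
  · intro heq
    have : -(x₁ - x₃) ^ 3 * (x₁ + x₃ - 2 * x₂) = 0 := by linarith [key]
    rcases mul_eq_zero.mp this with h' | h'
    · exact absurd (neg_eq_zero.mp h') hcube
    · linarith
  · intro heq
    have : (x₁ + x₃ - 2 * x₂) = 0 := by linarith
    rw [this, mul_zero] at key
    linarith
end

section
/- Let p(x) = x⁴ + ax³ + bx² + cx + d with real coefficients and heat evolution P(x,t) = x⁴ + ax³ + (b+6t)x² + (c+3at)x + (d+bt+3t²). Let t ≥ 0, let x₁ < x₂ < x₃ be real numbers that are exactly the real roots of 4x³ + 3ax² + 2bx + c, and let y₁ < y₂ < y₃ be real numbers that are exactly the real roots of 4x³ + 3ax² + (2b+12t)x + (c+3at). If p(x₁) < p(x₃), then P(y₁,t) < P(y₃,t). -/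
lemma cubic_aux (a b c x₁ x₂ x₃ : ℝ) (h12 : x₁ < x₂) (h23 : x₂ < x₃)
    (h1 : 4*x₁^3+3*a*x₁^2+2*b*x₁+c = 0)
    (h2 : 4*x₂^3+3*a*x₂^2+2*b*x₂+c = 0)
    (h3 : 4*x₃^3+3*a*x₃^2+2*b*x₃+c = 0) :
    3*a + 4*(x₁+x₂+x₃) = 0 ∧
    (∀ x : ℝ, 4*x^3+3*a*x^2+2*b*x+c = 4*(x-x₁)*(x-x₂)*(x-x₃)) ∧
    (x₃^4+a*x₃^3+b*x₃^2+c*x₃) - (x₁^4+a*x₁^3+b*x₁^2+c*x₁)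
      = 2/3*(x₃-x₁)^3*(x₂-(x₁+x₃)/2) := by
  have e12 : (x₁ - x₂) * (4*(x₁^2+x₁*x₂+x₂^2) + 3*a*(x₁+x₂) + 2*b) = 0 := by
    linear_combination h1 - h2
  have d12 : 4*(x₁^2+x₁*x₂+x₂^2) + 3*a*(x₁+x₂) + 2*b = 0 :=
    (mul_eq_zero.mp e12).resolve_left (sub_ne_zero.mpr h12.ne)
  have e23 : (x₂ - x₃) * (4*(x₂^2+x₂*x₃+x₃^2) + 3*a*(x₂+x₃) + 2*b) = 0 := by
    linear_combination h2 - h3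
  have d23 : 4*(x₂^2+x₂*x₃+x₃^2) + 3*a*(x₂+x₃) + 2*b = 0 :=
    (mul_eq_zero.mp e23).resolve_left (sub_ne_zero.mpr h23.ne)
  have e13 : (x₁ - x₃) * (3*a + 4*(x₁+x₂+x₃)) = 0 := by
    linear_combination d12 - d23
  have ra : 3*a + 4*(x₁+x₂+x₃) = 0 :=
    (mul_eq_zero.mp e13).resolve_left (sub_ne_zero.mpr (h12.trans h23).ne)
  have rb : 2*b - 4*(x₁*x₂+x₁*x₃+x₂*x₃) = 0 := by
    linear_combination d12 - (x₁+x₂)*ra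
  have rc : c + 4*(x₁*x₂*x₃) = 0 := by
    linear_combination h1 - x₁^2*ra - x₁*rb
  refine ⟨ra, fun x => ?_, ?_⟩
  · linear_combination x^2*ra + x*rb + rc
  · linear_combination ((x₃^3-x₁^3)/3)*ra + ((x₃^2-x₁^2)/2)*rb + (x₃-x₁)*rc

set_option maxHeartbeats 1000000 in
theorem quartic_global_min_persists (a b c d t : ℝ) (ht : 0 ≤ t)
    (x₁ x₂ x₃ y₁ y₂ y₃ : ℝ)
    (hx12 : x₁ < x₂) (hx23 : x₂ < x₃) (hy12 : y₁ < y₂) (hy23 : y₂ < y₃)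
    (hx : ∀ x : ℝ, 4 * x ^ 3 + 3 * a * x ^ 2 + 2 * b * x + c = 0 ↔
      (x = x₁ ∨ x = x₂ ∨ x = x₃))
    (hy : ∀ x : ℝ, 4 * x ^ 3 + 3 * a * x ^ 2 + (2 * b + 12 * t) * x
        + (c + 3 * a * t) = 0 ↔ (x = y₁ ∨ x = y₂ ∨ x = y₃))
    (hp : x₁ ^ 4 + a * x₁ ^ 3 + b * x₁ ^ 2 + c * x₁ + d
        < x₃ ^ 4 + a * x₃ ^ 3 + b * x₃ ^ 2 + c * x₃ + d) :
    y₁ ^ 4 + a * y₁ ^ 3 + (b + 6 * t) * y₁ ^ 2 + (c + 3 * a * t) * y₁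
        + (d + b * t + 3 * t ^ 2)
      < y₃ ^ 4 + a * y₃ ^ 3 + (b + 6 * t) * y₃ ^ 2 + (c + 3 * a * t) * y₃
        + (d + b * t + 3 * t ^ 2) := by
  have h1 : 4*x₁^3+3*a*x₁^2+2*b*x₁+c = 0 := by
    linear_combination (hx x₁).mpr (Or.inl rfl)
  have h2 : 4*x₂^3+3*a*x₂^2+2*b*x₂+c = 0 := by
    linear_combination (hx x₂).mpr (Or.inr (Or.inl rfl))
  have h3 : 4*x₃^3+3*a*x₃^2+2*b*x₃+c = 0 := by
    linear_combination (hx x₃).mpr (Or.inr (Or.inr rfl))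
  have k1 : 4*y₁^3+3*a*y₁^2+2*(b+6*t)*y₁+(c+3*a*t) = 0 := by
    linear_combination (hy y₁).mpr (Or.inl rfl)
  have k2 : 4*y₂^3+3*a*y₂^2+2*(b+6*t)*y₂+(c+3*a*t) = 0 := by
    linear_combination (hy y₂).mpr (Or.inr (Or.inl rfl))
  have k3 : 4*y₃^3+3*a*y₃^2+2*(b+6*t)*y₃+(c+3*a*t) = 0 := by
    linear_combination (hy y₃).mpr (Or.inr (Or.inr rfl))
  obtain ⟨rax, factx, diffx⟩ := cubic_aux a b c x₁ x₂ x₃ hx12 hx23 h1 h2 h3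
  obtain ⟨ray, facty, diffy⟩ :=
    cubic_aux a (b+6*t) (c+3*a*t) y₁ y₂ y₃ hy12 hy23 k1 k2 k3
  -- From hp, the middle critical point x₂ lies right of the midpoint
  have hmul : 0 < (x₃-x₁)^3*(x₂-(x₁+x₃)/2) := by nlinarith [diffx, hp]
  have hcube : 0 < (x₃-x₁)^3 := by
    have : 0 < x₃ - x₁ := by linarith
    positivity
  have hx2 : (x₁+x₃)/2 < x₂ := by
    rcases mul_pos_iff.mp hmul with ⟨_, h⟩ | ⟨h, _⟩
    · linarith
    · linarith
  -- Set u = -a/4; cubic values at u agree for both times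
  set u : ℝ := -(a/4) with hu
  have hSx : x₁ + x₂ + x₃ = 3*u := by rw [hu]; linarith
  have hSy : y₁ + y₂ + y₃ = 3*u := by rw [hu]; linarith
  have hux1 : x₁ < u := by linarith
  have hux2 : u < x₂ := by linarith
  have hux3 : u < x₃ := by linarith
  have hfu : 0 < 4*u^3+3*a*u^2+2*b*u+c := by
    have key : 4*u^3+3*a*u^2+2*b*u+c = 4*((u-x₁)*((x₂-u)*(x₃-u))) := by
      linear_combination factx u
    have hpos : 0 < (u-x₁)*((x₂-u)*(x₃-u)) :=
      mul_pos (sub_pos.mpr hux1) (mul_pos (sub_pos.mpr hux2) (sub_pos.mpr hux3))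
    linarith
  have hgu : 0 < 4*u^3+3*a*u^2+2*(b+6*t)*u+(c+3*a*t) := by
    have h4u : 4*u + a = 0 := by rw [hu]; ring
    have : 4*u^3+3*a*u^2+2*(b+6*t)*u+(c+3*a*t) = 4*u^3+3*a*u^2+2*b*u+c := by
      linear_combination 3*t*h4u
    linarith
  have huy1 : y₁ < u := by linarith
  have huy3 : u < y₃ := by linarith
  have hgfact := facty u
  have huy2 : u < y₂ := by
    by_contra h
    push_neg at h
    nlinarith [mul_nonneg (sub_pos.mpr huy1).le (sub_nonneg.mpr h), sub_pos.mpr huy3]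
  have hy2mid : 0 < y₂ - (y₁+y₃)/2 := by linarith
  have hcubey : 0 < (y₃-y₁)^3 := by
    have : 0 < y₃ - y₁ := by linarith
    positivity
  nlinarith [diffy, mul_pos hcubey hy2mid]
end

section
/- Let p(x) = x⁴ + ax³ + bx² + cx + d with real coefficients, and suppose its derivative factors as p'(x) = 4(x−x₁)(x−x₂)(x−x₃) with x₁ < x₂ < x₃. Then the following are equivalent: (i) x₃ is the unique global minimizer of p, i.e. p(x₃) < p(y) for every real y ≠ x₃; (ii) x₁ + x₃ > 2x₂; (iii) x₂ < −a/4. -/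
theorem quartic_global_minimizer_criterion (a b c d x₁ x₂ x₃ : ℝ)
    (h12 : x₁ < x₂) (h23 : x₂ < x₃)
    (h : ∀ x : ℝ, 4 * x ^ 3 + 3 * a * x ^ 2 + 2 * b * x + c
      = 4 * (x - x₁) * (x - x₂) * (x - x₃)) :
    ((∀ y : ℝ, y ≠ x₃ →
        x₃ ^ 4 + a * x₃ ^ 3 + b * x₃ ^ 2 + c * x₃ + d
          < y ^ 4 + a * y ^ 3 + b * y ^ 2 + c * y + d)
      ↔ 2 * x₂ < x₁ + x₃) ∧
    (2 * x₂ < x₁ + x₃ ↔ x₂ < -a / 4) := by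
  have ha : a = -4 * (x₁ + x₂ + x₃) / 3 := by
    linear_combination (h 1 + h (-1) - 2 * h 0) / 6
  have hb : b = 2 * (x₁ * x₂ + x₁ * x₃ + x₂ * x₃) := by
    linear_combination (h 1 - h (-1)) / 4
  have hc : c = -(4 * (x₁ * x₂ * x₃)) := by
    linear_combination h 0
  have key : ∀ y : ℝ,
      (y ^ 4 + a * y ^ 3 + b * y ^ 2 + c * y + d)
        - (x₃ ^ 4 + a * x₃ ^ 3 + b * x₃ ^ 2 + c * x₃ + d)
      = (y - x₃) ^ 2 * (y ^ 2 + ((2 * x₃ - 4 * x₁ - 4 * x₂) / 3) * y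
          + (2 * x₁ * x₂ + (x₃ ^ 2 - 2 * x₁ * x₃ - 2 * x₂ * x₃) / 3)) := by
    intro y
    linear_combination (y ^ 3 - x₃ ^ 3) * ha + (y ^ 2 - x₃ ^ 2) * hb + (y - x₃) * hc
  constructor
  · constructor
    · intro hmin
      by_contra hle
      push_neg at hle
      have h1 := hmin x₁ (by linarith)
      have hk := key x₁
      have hq : (x₃ - x₁) * (x₁ + x₃ - 2 * x₂) ≤ 0 :=
        mul_nonpos_of_nonneg_of_nonpos (by linarith) (by linarith)
      nlinarith [hk, h1, mul_nonneg (sq_nonneg (x₁ - x₃)) (neg_nonneg.mpr hq)]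
    · intro hgt y hy
      have hk := key y
      have hpos : 0 < (x₂ + x₃ - 2 * x₁) * (x₁ + x₃ - 2 * x₂) :=
        mul_pos (by linarith) (by linarith)
      have hy2 : 0 < (y - x₃) ^ 2 := by
        have : y - x₃ ≠ 0 := sub_ne_zero.mpr hy
        positivity
      have hq : 0 < y ^ 2 + ((2 * x₃ - 4 * x₁ - 4 * x₂) / 3) * y
          + (2 * x₁ * x₂ + (x₃ ^ 2 - 2 * x₁ * x₃ - 2 * x₂ * x₃) / 3) := by
        nlinarith [sq_nonneg (6 * y + (2 * x₃ - 4 * x₁ - 4 * x₂)), hpos]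
      nlinarith [mul_pos hy2 hq, hk]
  · constructor <;> intro h' <;> nlinarith [ha, h']
end

section
/- Let p(x) = x⁴ + ax³ + bx² + cx + d with real coefficients, and suppose its derivative factors as p'(x) = 4(x−x₁)(x−x₂)(x−x₃) with x₁ < x₂ < x₃. Then the following are equivalent: (i) p(x₁) = p(x₃); (ii) x₁ + x₃ = 2x₂; (iii) x₂ = −a/4; (iv) t* = t_u, where t* = a²/16 − b/6 and t_u = a²/16 − b/6 − (1/16)·((a³−4ab+8c)²)^{1/3}. -/
theorem quartic_symmetric_equivalences (a b c d x₁ x₂ x₃ : ℝ)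
    (h12 : x₁ < x₂) (h23 : x₂ < x₃)
    (h : ∀ x : ℝ, 4 * x ^ 3 + 3 * a * x ^ 2 + 2 * b * x + c
      = 4 * (x - x₁) * (x - x₂) * (x - x₃)) :
    ((x₁ ^ 4 + a * x₁ ^ 3 + b * x₁ ^ 2 + c * x₁ + d
        = x₃ ^ 4 + a * x₃ ^ 3 + b * x₃ ^ 2 + c * x₃ + d)
      ↔ x₁ + x₃ = 2 * x₂) ∧
    (x₁ + x₃ = 2 * x₂ ↔ x₂ = -a / 4) ∧
    (x₂ = -a / 4 ↔
      a ^ 2 / 16 - b / 6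
        = a ^ 2 / 16 - b / 6
          - (1 / 16) * ((a ^ 3 - 4 * a * b + 8 * c) ^ 2) ^ ((1 : ℝ) / 3)) := by
  have ha : a = -4 * (x₁ + x₂ + x₃) / 3 := by
    linear_combination (h 1) / 6 + (h (-1)) / 6 - (h 0) / 3
  have hb : b = 2 * (x₁ * x₂ + x₁ * x₃ + x₂ * x₃) := by
    linear_combination (h 1) / 4 - (h (-1)) / 4
  have hc : c = -4 * (x₁ * x₂ * x₃) := by
    linear_combination h 0
  subst ha hb hc
  have h31 : (0:ℝ) < x₃ - x₁ := by linarith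
  -- the quantity E
  set E : ℝ := (-4 * (x₁ + x₂ + x₃) / 3) ^ 3
      - 4 * (-4 * (x₁ + x₂ + x₃) / 3) * (2 * (x₁ * x₂ + x₁ * x₃ + x₂ * x₃))
      + 8 * (-4 * (x₁ * x₂ * x₃)) with hE
  have hEfac : E = 32 * ((x₂ + x₃ - 2 * x₁) / 3) * ((x₁ + x₃ - 2 * x₂) / 3)
      * ((x₁ + x₂ - 2 * x₃) / 3) := by rw [hE]; ring
  refine ⟨?_, ?_, ?_⟩
  · constructor
    · intro heq
      have key : (x₃ - x₁) ^ 3 * (x₁ + x₃ - 2 * x₂) = 0 := by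
        linear_combination 3 * heq
      rcases mul_eq_zero.1 key with h1 | h2
      · exact absurd h1 (ne_of_gt (pow_pos h31 3))
      · linarith
    · intro heq
      linear_combination ((x₃ - x₁) ^ 3 / 3) * heq
  · constructor <;> intro heq <;> linarith
  · constructor
    · intro heq
      have h0 : x₁ + x₃ - 2 * x₂ = 0 := by linarith
      have hE0 : E = 0 := by
        rw [hEfac]
        linear_combination (32 * ((x₂ + x₃ - 2 * x₁) / 3) * ((x₁ + x₂ - 2 * x₃) / 3) / 3) * h0
      rw [hE0]
      norm_num [Real.zero_rpow]
    · intro heq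
      have hz2 : (E ^ 2 : ℝ) ^ ((1:ℝ)/3) = 0 := by linarith
      have hE2 : E ^ 2 = 0 :=
        ((Real.rpow_eq_zero (sq_nonneg E) (by norm_num)).1 hz2)
      have hE0 : E = 0 := pow_eq_zero_iff two_ne_zero |>.1 hE2
      rw [hEfac] at hE0
      have hne1 : (x₂ + x₃ - 2 * x₁) / 3 ≠ 0 := by intro hh; linarith
      have hne3 : (x₁ + x₂ - 2 * x₃) / 3 ≠ 0 := by intro hh; linarith
      have : (x₁ + x₃ - 2 * x₂) / 3 = 0 := by
        rcases mul_eq_zero.1 hE0 with hh | hh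
        · rcases mul_eq_zero.1 hh with hh2 | hh2
          · rcases mul_eq_zero.1 hh2 with hh3 | hh3
            · norm_num at hh3
            · exact absurd hh3 hne1
          · exact hh2
        · exact absurd hh hne3
      linarith
end

section
/- Let b,c,d be real numbers and let real numbers x,t satisfy both x⁴ + (2b/5 + 6t)x² + (c/5)x + (d/15 + (2b/5)t + 3t²) = 0 and x³ + (b/5 + 3t)x + c/20 = 0. Writing t' = t + b/15 and h = b² − 5d, it follows that t'·x² + (c/20)·x + t'² − h/225 = 0 and x·(36000·t'³ + 80·h·t' + 45c²) + c·(1800·t'² − 4h) = 0. -/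
theorem sextic_FP2_inter_FP3_reduction (b c d t x : ℝ)
    (h2 : x ^ 4 + (2 * b / 5 + 6 * t) * x ^ 2 + (c / 5) * x
        + (d / 15 + (2 * b / 5) * t + 3 * t ^ 2) = 0)
    (h3 : x ^ 3 + (b / 5 + 3 * t) * x + c / 20 = 0) :
    (t + b / 15) * x ^ 2 + (c / 20) * x + (t + b / 15) ^ 2
        - (b ^ 2 - 5 * d) / 225 = 0 ∧
    x * (36000 * (t + b / 15) ^ 3 + 80 * (b ^ 2 - 5 * d) * (t + b / 15)
        + 45 * c ^ 2)
      + c * (1800 * (t + b / 15) ^ 2 - 4 * (b ^ 2 - 5 * d)) = 0 := by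
  constructor
  · linear_combination (1/3) * h2 - (x/3) * h3
  · linear_combination 18000 * (t + b/15)^2 * h3
      - 18000 * ((t + b/15) * x - c/20) * ((1/3) * h2 - (x/3) * h3)
end
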